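/- (Hoffman Proximity Theorem) Let W ⊆ ℝ^n be a linear subspace, ℓ ∈ (ℝ ∪ {−∞})^n and u ∈ (ℝ ∪ {+∞})^n lower and upper bounds, and assume P = {x ∈ W : ℓ ≤ x ≤ u} is nonempty. Define ℓ⁺ ∈ ℝ^n by ℓ⁺_i = max(ℓ_i, 0) (with ℓ⁺_i = 0 if ℓ_i = −∞) and u⁻ ∈ ℝ^n by u⁻_i = max(−u_i, 0) (with u⁻_i = 0 if u_i = +∞), and let Λ(u,ℓ) = supp(u⁻) ∪ supp(ℓ⁺). Then: (i) for every x ∈ P, ‖ℓ⁺ + u⁻‖₁ ≤ ‖x_{Λ(u,ℓ)}‖₁; and (ii) there exists x ∈ P such that ‖x‖_∞ ≤ κ_W ‖ℓ⁺ + u⁻‖₁. -/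

import Mathlib

/-!
Part (i) is coordinatewise: every real number in `[ℓᵢ, uᵢ]` has absolute value at least
`ℓ⁺ᵢ + u⁻ᵢ`, the distance from `0` to that interval.

For (ii), take `x ∈ P` of least ℓ₁ norm. Every nonzero `g ∈ W` sign-consistent with `x` is
nonzero at some tight coordinate `j`, one with `|x_j| = ℓ⁺_j + u⁻_j`: otherwise `x - ε g` stays
in `P` and has smaller ℓ₁ norm. Now peel sign-consistent circuits `g` off `x` one at a time.
Each satisfies `|g_i| ≤ κ_W |g_j|` at a tight `j`, and since the pieces never cancel, summing
gives `|x_i| ≤ κ_W ∑_{j tight} |x_j| ≤ κ_W ‖ℓ⁺ + u⁻‖₁`.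
-/

open scoped BigOperators

variable {ι : Type*} [Fintype ι] [DecidableEq ι]

/-- The ℓ₁ norm of a vector. -/
noncomputable def norm1 (x : ι → ℝ) : ℝ := ∑ i, |x i|

/-- The ℓ∞ norm of a vector. -/
noncomputable def normInf (x : ι → ℝ) : ℝ := ⨆ i, |x i|

/-- The ℓ₂ norm of a vector. -/
noncomputable def norm2 (x : ι → ℝ) : ℝ := Real.sqrt (∑ i, (x i) ^ 2)

/-- The componentwise negative part `max (-x) 0`. -/
noncomputable def vneg (x : ι → ℝ) : ι → ℝ := fun i => max (-(x i)) 0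

/-- The componentwise positive part `max x 0`. -/
noncomputable def vpos (x : ι → ℝ) : ι → ℝ := fun i => max (x i) 0

/-- `y` is sign-consistent with `x`. -/
def SignConsistent (y x : ι → ℝ) : Prop :=
  (∀ i, 0 ≤ x i * y i) ∧ ∀ i, x i = 0 → y i = 0

/-- The subspace `ℝ^n_C` of vectors supported on `C`. -/
def coordSubspace (C : Set ι) : Submodule ℝ (ι → ℝ) where
  carrier := {x | ∀ i ∉ C, x i = 0}
  zero_mem' := by intro i _; rfl
  add_mem' := by intro a b ha hb i hi; simp [ha i hi, hb i hi]
  smul_mem' := by intro c a ha i hi; simp [ha i hi]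

/-- `C` is a circuit of the subspace `W`: `W ∩ ℝ^n_C` is one-dimensional and no
strict subset of `C` has this property. -/
def IsCircuit (W : Submodule ℝ (ι → ℝ)) (C : Set ι) : Prop :=
  Module.finrank ℝ ↥(W ⊓ coordSubspace C) = 1 ∧
  ∀ C' : Set ι, C' ⊂ C → Module.finrank ℝ ↥(W ⊓ coordSubspace C') ≠ 1

/-- The circuit imbalance measure `κ_W`. -/
noncomputable def kappa (W : Submodule ℝ (ι → ℝ)) : ℝ :=
  sSup ({1} ∪ {r | ∃ C : Set ι, IsCircuit W C ∧ ∃ g ∈ W, g ≠ 0 ∧ {i | g i ≠ 0} = C ∧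
    r = sSup ((fun i => |g i|) '' C) / sInf ((fun i => |g i|) '' C)})

/-- The matroidal closure of `K` with respect to `W`. -/
def clos (W : Submodule ℝ (ι → ℝ)) (K : Set ι) : Set ι :=
  K ∪ {j | j ∉ K ∧ ∃ C : Set ι, IsCircuit W C ∧ j ∈ C ∧ C ⊆ K ∪ {j}}

/-- `z` is the minimum-norm lift `L_I^W(p)` of `p` to `W`:
`z ∈ W`, `z` agrees with `p` on `I`, and `z` has minimum ℓ₂-norm among such vectors. -/
def IsMinLift (W : Submodule ℝ (ι → ℝ)) (I : Finset ι) (p z : ι → ℝ) : Prop :=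
  z ∈ W ∧ (∀ i ∈ I, z i = p i) ∧
  ∀ z' ∈ W, (∀ i ∈ I, z' i = p i) → norm2 z ≤ norm2 z'

/-- The ℓ₂→ℓ₂ operator norm of the lifting map `L_I^W` on `π_I(W)`. -/
noncomputable def liftOpNorm (W : Submodule ℝ (ι → ℝ)) (I : Finset ι) : ℝ :=
  sSup {r | ∃ p z, IsMinLift W I p z ∧ r = norm2 z / Real.sqrt (∑ i ∈ I, (p i) ^ 2)}

/-- The condition number `χ̄_W = max{‖L_I^W‖ : ∅ ≠ I}`. -/
noncomputable def chiBar (W : Submodule ℝ (ι → ℝ)) : ℝ :=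
  sSup {r | ∃ I : Finset ι, I.Nonempty ∧ r = liftOpNorm W I}

/-- The orthogonal complement of `W` in `ℝ^n`. -/
def orthComp (W : Submodule ℝ (ι → ℝ)) : Submodule ℝ (ι → ℝ) where
  carrier := {y | ∀ x ∈ W, ∑ i, x i * y i = 0}
  zero_mem' := by intro x hx; simp
  add_mem' := by
    intro a b ha hb x hx
    simpa [mul_add, Finset.sum_add_distrib, ha x hx] using hb x hx
  smul_mem' := by
    intro c a ha x hx
    have h := ha x hx
    have : ∑ i, x i * (c • a) i = c * ∑ i, x i * a i := by
      rw [Finset.mul_sum]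
      refine Finset.sum_congr rfl fun i _ => ?_
      simp [Pi.smul_apply, smul_eq_mul]; ring
    simpa [this, h]

/-- `x` is a feasible solution to the primal program of Primal-Dual(W,d,c). -/
def PrimalFeasible (W : Submodule ℝ (ι → ℝ)) (d x : ι → ℝ) : Prop :=
  x - d ∈ W ∧ ∀ i, 0 ≤ x i

/-- `s` is a feasible solution to the dual program of Primal-Dual(W,d,c). -/
def DualFeasible (W : Submodule ℝ (ι → ℝ)) (c s : ι → ℝ) : Prop :=
  s - c ∈ orthComp W ∧ ∀ i, 0 ≤ s i

/-- `(x,s)` is an optimal solution to Primal-Dual(W,d,c): both feasible and `⟨x,s⟩ = 0`. -/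
def IsOptimalPair (W : Submodule ℝ (ι → ℝ)) (d c x s : ι → ℝ) : Prop :=
  PrimalFeasible W d x ∧ DualFeasible W c s ∧ ∑ i, x i * s i = 0

/-- The ℓ₂→ℓ₂ operator norm of a matrix. -/
noncomputable def l2OpNorm {m n : Type*} [Fintype m] [Fintype n] [DecidableEq n]
    (A : Matrix m n ℝ) : ℝ :=
  ‖LinearMap.toContinuousLinearMap (Matrix.toEuclideanLin A)‖

/-- The max-norm (largest absolute value of an entry) of a matrix. -/
noncomputable def matMaxNorm {m n : Type*} [Fintype m] [Fintype n] (A : Matrix m n ℝ) : ℝ :=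
  ⨆ i, ⨆ j, |A i j|

open Filter Topology Function
open scoped Pointwise

variable {α : Type*}

lemma mul_nonneg_of_mul_nonneg_of_mul_nonneg {a b c : ℝ} (hab : 0 ≤ a * b) (hbc : 0 ≤ b * c)
    (hb : b ≠ 0) : 0 ≤ a * c := by
  have h : 0 ≤ a * c * b ^ 2 := by nlinarith [mul_nonneg hab hbc]
  exact nonneg_of_mul_nonneg_left h (by positivity)

namespace SignConsistent

lemma refl (x : α → ℝ) : SignConsistent x x :=
  ⟨fun i => mul_self_nonneg (x i), fun _ h => h⟩

lemma support_subset {x y : α → ℝ} (h : SignConsistent y x) : support y ⊆ support x :=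
  fun i hy hx => hy (h.2 i hx)

lemma trans {x y z : α → ℝ} (hzy : SignConsistent z y) (hyx : SignConsistent y x) :
    SignConsistent z x := by
  refine ⟨fun i => ?_, fun i hx => hzy.2 i (hyx.2 i hx)⟩
  by_cases hy : y i = 0
  · simp [hzy.2 i hy]
  · exact mul_nonneg_of_mul_nonneg_of_mul_nonneg (hyx.1 i) (hzy.1 i) hy

lemma smul {x y : α → ℝ} (h : SignConsistent y x) {c : ℝ} (hc : 0 ≤ c) :
    SignConsistent (c • y) x := by
  refine ⟨fun i => ?_, fun i hx => by simp [h.2 i hx]⟩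
  simpa only [Pi.smul_apply, smul_eq_mul, mul_left_comm] using mul_nonneg hc (h.1 i)

lemma abs_add {x a b : α → ℝ} (ha : SignConsistent a x) (hb : SignConsistent b x) (i : α) :
    |a i + b i| = |a i| + |b i| := by
  have hab : 0 ≤ a i * b i := by
    by_cases hx : x i = 0
    · simp [ha.2 i hx]
    · exact mul_nonneg_of_mul_nonneg_of_mul_nonneg (mul_comm (x i) (a i) ▸ ha.1 i) (hb.1 i) hx
  exact (abs_add_eq_add_abs_iff _ _).2 (mul_nonneg_iff.1 hab)

lemma sub_smul_self {x g : α → ℝ} (hg : SignConsistent g x) {ε : ℝ} (hε : 0 ≤ ε)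
    (h : ∀ i, ε * |g i| ≤ |x i|) : SignConsistent (x - ε • g) x := by
  refine ⟨fun i => ?_, fun i hx => by simp [hx, hg.2 i hx]⟩
  have hxg : x i * g i = |x i| * |g i| := by rw [← abs_mul, abs_of_nonneg (hg.1 i)]
  have hxx : x i * x i = |x i| * |x i| := by rw [← abs_mul, abs_mul_self]
  have : 0 ≤ |x i| * (|x i| - ε * |g i|) := mul_nonneg (abs_nonneg _) (sub_nonneg.2 (h i))
  simp only [Pi.sub_apply, Pi.smul_apply, smul_eq_mul]
  nlinarith

end SignConsistent

lemma exists_signConsistent_sub_smul [Fintype α] {g h : α → ℝ} (hsupp : support h ⊆ support g)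
    (hpos : ∃ i, 0 < g i * h i) :
    ∃ t : ℝ, 0 < t ∧ SignConsistent (g - t • h) g ∧ support (g - t • h) ⊂ support g := by
  classical
  set S := Finset.univ.filter fun i => 0 < g i * h i
  have hS : S.Nonempty := let ⟨i, hi⟩ := hpos; ⟨i, by simpa [S] using hi⟩
  obtain ⟨j, hjS, hjmin⟩ := S.exists_min_image (fun i => g i / h i) hS
  have hj : 0 < g j * h j := (Finset.mem_filter.1 hjS).2
  have hhj : h j ≠ 0 := right_ne_zero_of_mul hj.ne'
  have ht : 0 < g j / h j := by
    rw [show g j / h j = g j * h j / h j ^ 2 by field_simp]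
    positivity
  have hsc : SignConsistent (g - (g j / h j) • h) g := by
    refine ⟨fun i => ?_, fun i hi => by simp [hi, not_not.1 fun hh => hsupp hh hi]⟩
    simp only [Pi.sub_apply, Pi.smul_apply, smul_eq_mul]
    by_cases hi : 0 < g i * h i
    · have hle := mul_le_mul_of_nonneg_right (hjmin i (by simpa [S] using hi)) hi.le
      have hgi : g i / h i * (g i * h i) = g i * g i := by
        field_simp [right_ne_zero_of_mul hi.ne']
      nlinarith
    · nlinarith [mul_nonneg ht.le (neg_nonneg.2 (not_lt.1 hi)), mul_self_nonneg (g i)]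
  refine ⟨g j / h j, ht, hsc, (Set.ssubset_iff_of_subset hsc.support_subset).2 ⟨j, hsupp hhj, ?_⟩⟩
  simp [hhj]

lemma mem_coordSubspace_iff {C : Set α} {x : α → ℝ} : x ∈ coordSubspace C ↔ support x ⊆ C :=
  support_subset_iff'.symm

lemma IsCircuit.exists_eq_smul [Finite α] {W : Submodule ℝ (α → ℝ)} {C : Set α}
    (hC : IsCircuit W C) {g g' : α → ℝ} (hg : g ∈ W) (hg0 : g ≠ 0) (hgC : support g ⊆ C)
    (hg' : g' ∈ W) (hg'C : support g' ⊆ C) : ∃ c : ℝ, g' = c • g := by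
  have hle : ℝ ∙ g ≤ W ⊓ coordSubspace C :=
    (Submodule.span_singleton_le_iff_mem _ _).2 ⟨hg, mem_coordSubspace_iff.2 hgC⟩
  have heq := Submodule.eq_of_le_of_finrank_eq hle (by rw [finrank_span_singleton hg0, hC.1])
  have hg'g : g' ∈ ℝ ∙ g := heq ▸ ⟨hg', mem_coordSubspace_iff.2 hg'C⟩
  obtain ⟨c, hc⟩ := Submodule.mem_span_singleton.1 hg'g
  exact ⟨c, hc.symm⟩

lemma isCircuit_support_of_minimal [Finite α] {W : Submodule ℝ (α → ℝ)} {g : α → ℝ}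
    (hg : g ∈ W) (hg0 : g ≠ 0)
    (hmin : ∀ h ∈ W, h ≠ 0 → support h ⊆ support g → support g ⊆ support h) :
    IsCircuit W (support g) := by
  have hspan : W ⊓ coordSubspace (support g) = ℝ ∙ g := by
    refine le_antisymm (fun h ⟨hhW, hhg⟩ => ?_)
      ((Submodule.span_singleton_le_iff_mem _ _).2 ⟨hg, mem_coordSubspace_iff.2 subset_rfl⟩)
    obtain ⟨j, hj⟩ : ∃ j, g j ≠ 0 := Function.ne_iff.1 hg0
    have hzero : h - (h j / g j) • g = 0 := by
      by_contra hne
      have hsub : support (h - (h j / g j) • g) ⊆ support g :=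
        (support_sub _ _).trans
          (Set.union_subset (mem_coordSubspace_iff.1 hhg) (support_smul_subset_right _ _))
      exact hmin _ (W.sub_mem hhW (W.smul_mem _ hg)) hne hsub hj (by simp [div_mul_cancel₀ _ hj])
    exact Submodule.mem_span_singleton.2 ⟨h j / g j, (sub_eq_zero.1 hzero).symm⟩
  refine ⟨by rw [hspan]; exact finrank_span_singleton hg0, fun C hC hrank => ?_⟩
  obtain ⟨h, ⟨hhW, hhC⟩, hh0⟩ := Submodule.exists_mem_ne_zero_of_ne_bot
    (p := W ⊓ coordSubspace C) (by rintro hbot; rw [hbot, finrank_bot] at hrank; exact zero_ne_one hrank)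
  have hhC' := mem_coordSubspace_iff.1 hhC
  exact hC.2 ((hmin h hhW hh0 (hhC'.trans hC.1)).trans hhC')

/-- A nonzero vector of `W` sign-consistent with `x` and of least support is supported on a
circuit. -/
theorem exists_signConsistent_isCircuit [Fintype α] {W : Submodule ℝ (α → ℝ)} {x : α → ℝ}
    (hx : x ∈ W) (hx0 : x ≠ 0) :
    ∃ g ∈ W, g ≠ 0 ∧ SignConsistent g x ∧ IsCircuit W (support g) := by
  obtain ⟨g, ⟨hgW, hg0, hgx⟩, hmin⟩ := (measure fun g : α → ℝ => (support g).ncard).wf.has_min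
    {g | g ∈ W ∧ g ≠ 0 ∧ SignConsistent g x} ⟨x, hx, hx0, .refl x⟩
  refine ⟨g, hgW, hg0, hgx, isCircuit_support_of_minimal hgW hg0 fun h hhW hh0 hhg => ?_⟩
  by_contra hgh
  obtain ⟨k, hgk, hhk⟩ : ∃ k, g k ≠ 0 ∧ h k = 0 := by simpa [Set.not_subset] using hgh
  obtain ⟨h', hh'W, hh'h, hpos⟩ : ∃ h' ∈ W, support h' = support h ∧ ∃ i, 0 < g i * h' i := by
    obtain ⟨i, hi⟩ := Function.ne_iff.1 hh0
    rcases (mul_ne_zero (hhg hi) hi).lt_or_gt with hneg | hpos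
    · exact ⟨-h, W.neg_mem hhW, support_neg h, i, by simpa using hneg⟩
    · exact ⟨h, hhW, rfl, i, hpos⟩
  obtain ⟨t, -, hgt, hlt⟩ := exists_signConsistent_sub_smul (hh'h ▸ hhg) hpos
  have hh'k : h' k = 0 := by
    by_contra hk
    exact (hh'h ▸ hk : k ∈ support h) hhk
  refine hmin (g - t • h') ⟨W.sub_mem hgW (W.smul_mem t hh'W), ?_, hgt.trans hgx⟩
    (Set.ncard_lt_ncard hlt)
  exact Function.ne_iff.2 ⟨k, by simpa [hh'k] using hgk⟩

noncomputable def imbalance (g : α → ℝ) (C : Set α) : ℝ :=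
  sSup ((fun i => |g i|) '' C) / sInf ((fun i => |g i|) '' C)

lemma imbalance_smul (g : α → ℝ) (C : Set α) {c : ℝ} (hc : c ≠ 0) :
    imbalance (c • g) C = imbalance g C := by
  have himage : (fun i => |(c • g) i|) '' C = |c| • ((fun i => |g i|) '' C) := by
    rw [← Set.image_smul, Set.image_image]
    simp [abs_mul]
  rw [imbalance, imbalance, himage, Real.sSup_smul_of_nonneg (abs_nonneg c),
    Real.sInf_smul_of_nonneg (abs_nonneg c), smul_eq_mul, smul_eq_mul,
    mul_div_mul_left _ _ (abs_ne_zero.2 hc)]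

/-- On a circuit the imbalance does not depend on the chosen vector. -/
lemma finite_circuit_imbalances [Finite α] (W : Submodule ℝ (α → ℝ)) :
    {r | ∃ C : Set α, IsCircuit W C ∧ ∃ g ∈ W, g ≠ 0 ∧ {i | g i ≠ 0} = C ∧
      r = imbalance g C}.Finite := by
  refine (Set.finite_iUnion fun C : Set α => Set.Subsingleton.finite (s := {r | IsCircuit W C ∧
    ∃ g ∈ W, g ≠ 0 ∧ {i | g i ≠ 0} = C ∧ r = imbalance g C}) ?_).subset
      fun r ⟨C, hr⟩ => Set.mem_iUnion.2 ⟨C, hr⟩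
  rintro _ ⟨hC, g, hg, hg0, rfl, rfl⟩ _ ⟨-, g', hg', hg'0, hg'g, rfl⟩
  obtain ⟨c, rfl⟩ := hC.exists_eq_smul hg hg0 subset_rfl hg' hg'g.le
  exact (imbalance_smul g _ (left_ne_zero_of_smul hg'0)).symm

lemma le_kappa [Finite α] {W : Submodule ℝ (α → ℝ)} {r : ℝ}
    (hr : r = 1 ∨ ∃ C : Set α, IsCircuit W C ∧ ∃ g ∈ W, g ≠ 0 ∧ {i | g i ≠ 0} = C ∧
      r = imbalance g C) : r ≤ kappa W :=
  le_csSup ((Set.finite_singleton 1).union (finite_circuit_imbalances W)).bddAbove hr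

lemma kappa_nonneg [Finite α] (W : Submodule ℝ (α → ℝ)) : 0 ≤ kappa W :=
  zero_le_one.trans (le_kappa (.inl rfl))

lemma abs_le_kappa_mul_abs [Finite α] {W : Submodule ℝ (α → ℝ)} {g : α → ℝ} (hg : g ∈ W)
    (hC : IsCircuit W (support g)) {j : α} (hj : g j ≠ 0) (i : α) :
    |g i| ≤ kappa W * |g j| := by
  set A := (fun i => |g i|) '' support g
  have hA : A.Finite := Set.toFinite _
  have hjA : |g j| ∈ A := ⟨j, hj, rfl⟩
  obtain ⟨k, hk, hkA⟩ := Set.Nonempty.csInf_mem ⟨_, hjA⟩ hA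
  have hinf : 0 < sInf A := hkA ▸ abs_pos.2 hk
  have hsup : sSup A ≤ kappa W * sInf A :=
    (div_le_iff₀ hinf).1 (le_kappa (.inr ⟨_, hC, g, hg, by rintro rfl; exact hj rfl, rfl, rfl⟩))
  have hgi : |g i| ≤ sSup A := by
    by_cases hi : g i = 0
    · rw [hi, abs_zero]
      exact (abs_nonneg (g j)).trans (le_csSup hA.bddAbove hjA)
    · exact le_csSup hA.bddAbove ⟨i, hi, rfl⟩
  calc |g i| ≤ kappa W * sInf A := hgi.trans hsup
    _ ≤ kappa W * |g j| := mul_le_mul_of_nonneg_left (csInf_le hA.bddBelow hjA) (kappa_nonneg W)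

theorem abs_le_kappa_mul_sum_of_meets_circuits [Fintype α] {W : Submodule ℝ (α → ℝ)}
    (T : Finset α) {x : α → ℝ} (hx : x ∈ W)
    (hT : ∀ g ∈ W, g ≠ 0 → SignConsistent g x → IsCircuit W (support g) → ∃ j ∈ T, g j ≠ 0)
    (i : α) : |x i| ≤ kappa W * ∑ j ∈ T, |x j| := by
  induction hn : (support x).ncard using Nat.strong_induction_on generalizing x with
  | _ n ih =>
  by_cases hx0 : x = 0
  · simp [hx0]
  obtain ⟨g, hgW, hg0, hgx, hgC⟩ := exists_signConsistent_isCircuit hx hx0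
  obtain ⟨j, hjT, hj⟩ := hT g hgW hg0 hgx hgC
  have hpos : 0 < x j * g j := (hgx.1 j).lt_of_ne' (mul_ne_zero (fun h => hj (hgx.2 j h)) hj)
  obtain ⟨t, ht, hx'x, hlt⟩ := exists_signConsistent_sub_smul hgx.support_subset ⟨j, hpos⟩
  set x' := x - t • g
  have hsplit : ∀ k, |x k| = |x' k| + t * |g k| := fun k => by
    simpa [x', abs_mul, abs_of_pos ht] using hx'x.abs_add (hgx.smul ht.le) k
  have ih' : |x' i| ≤ kappa W * ∑ k ∈ T, |x' k| :=
    ih _ (hn ▸ Set.ncard_lt_ncard hlt) (W.sub_mem hx (W.smul_mem t hgW))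
      (fun g' hg' hg'0 hg'x hg'C => hT g' hg' hg'0 (hg'x.trans hx'x) hg'C) rfl
  have hsum : ∑ k ∈ T, |x' k| + t * |g j| ≤ ∑ k ∈ T, |x k| := by
    simp_rw [hsplit]
    rw [Finset.sum_add_distrib, ← Finset.mul_sum]
    gcongr
    exact Finset.single_le_sum (fun k _ => abs_nonneg (g k)) hjT
  calc |x i| = |x' i| + t * |g i| := hsplit i
    _ ≤ kappa W * ∑ k ∈ T, |x' k| + t * (kappa W * |g j|) :=
      add_le_add ih' (mul_le_mul_of_nonneg_left (abs_le_kappa_mul_abs hgW hgC hj i) ht.le)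
    _ = kappa W * (∑ k ∈ T, |x' k| + t * |g j|) := by ring
    _ ≤ kappa W * ∑ k ∈ T, |x k| := mul_le_mul_of_nonneg_left hsum (kappa_nonneg W)

/-- The distance from `0` to the interval `[l, u]`; coordinatewise this is `ℓ⁺ + u⁻`. -/
noncomputable def zeroGap (l u : EReal) : ℝ := (max l 0).toReal + (max (-u) 0).toReal

lemma zeroGap_nonneg {l u : EReal} : 0 ≤ zeroGap l u :=
  add_nonneg (EReal.toReal_nonneg (le_max_right _ _)) (EReal.toReal_nonneg (le_max_right _ _))

lemma zeroGap_neg_neg (l u : EReal) : zeroGap (-u) (-l) = zeroGap l u := by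
  rw [zeroGap, zeroGap, neg_neg, add_comm]

lemma le_coe_iff_toReal_max_le {l : EReal} {s : ℝ} (hl : l ≠ ⊤) (hs : 0 ≤ s) :
    l ≤ s ↔ (max l 0).toReal ≤ s := by
  rw [← EReal.coe_le_coe_iff, EReal.coe_toReal (max_lt hl.lt_top EReal.zero_lt_top).ne
    (EReal.bot_lt_zero.trans_le (le_max_right _ _)).ne', max_le_iff]
  simp [hs]

lemma zeroGap_le_iff_of_mem_Icc {l u : EReal} {s t : ℝ} (hlt : l ≤ t) (htu : t ≤ u)
    (hs : s ∈ Set.Icc 0 t) : zeroGap l u ≤ s ↔ l ≤ s ∧ (s : EReal) ≤ u := by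
  have hu0 : max (-u) 0 = 0 :=
    max_eq_right (EReal.neg_le_zero.2 ((EReal.coe_nonneg.2 (hs.1.trans hs.2)).trans htu))
  rw [zeroGap, hu0, EReal.toReal_zero, add_zero,
    ← le_coe_iff_toReal_max_le (ne_top_of_le_ne_top (EReal.coe_ne_top t) hlt) hs.1]
  exact (and_iff_left ((EReal.coe_le_coe_iff.2 hs.2).trans htu)).symm

/-- `hts` and `hst` say that `s` lies between `0` and `t`. -/
lemma zeroGap_le_abs_iff {l u : EReal} {s t : ℝ} (hlt : l ≤ t) (htu : t ≤ u)
    (hts : 0 ≤ t * s) (hst : |s| ≤ |t|) : zeroGap l u ≤ |s| ↔ l ≤ s ∧ (s : EReal) ≤ u := by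
  rcases le_total 0 t with ht | ht
  · have hs : s ∈ Set.Icc 0 t := by
      rw [abs_of_nonneg ht, abs_le] at hst
      exact ⟨by nlinarith, hst.2⟩
    rw [abs_of_nonneg hs.1]
    exact zeroGap_le_iff_of_mem_Icc hlt htu hs
  · have hs : -s ∈ Set.Icc 0 (-t) := by
      rw [abs_of_nonpos ht, abs_le] at hst
      exact ⟨by nlinarith, by linarith⟩
    have key := zeroGap_le_iff_of_mem_Icc (l := -u) (u := -l)
      (by rwa [EReal.coe_neg, EReal.neg_le_neg_iff]) (by rwa [EReal.coe_neg, EReal.neg_le_neg_iff]) hs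
    rwa [zeroGap_neg_neg, EReal.coe_neg, EReal.neg_le_neg_iff, EReal.neg_le_neg_iff, and_comm,
      ← abs_of_nonneg hs.1, abs_neg] at key

lemma zeroGap_le_abs {l u : EReal} {s : ℝ} (hl : l ≤ s) (hu : (s : EReal) ≤ u) :
    zeroGap l u ≤ |s| :=
  (zeroGap_le_abs_iff hl hu (mul_self_nonneg s) le_rfl).2 ⟨hl, hu⟩

def feasibleSet (W : Submodule ℝ (α → ℝ)) (l u : α → EReal) : Set (α → ℝ) :=
  {x | x ∈ W ∧ ∀ i, l i ≤ (x i : EReal) ∧ (x i : EReal) ≤ u i}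

lemma isClosed_feasibleSet [Finite α] (W : Submodule ℝ (α → ℝ)) (l u : α → EReal) :
    IsClosed (feasibleSet W l u) := by
  have hcoe : ∀ i, Continuous fun y : α → ℝ => (y i : EReal) := fun i =>
    continuous_coe_real_ereal.comp (continuous_apply i)
  rw [feasibleSet, Set.ofPred_and, Set.ofPred_forall]
  refine W.closed_of_finiteDimensional.inter (isClosed_iInter fun i => ?_)
  rw [Set.ofPred_and]
  exact (isClosed_le continuous_const (hcoe i)).inter (isClosed_le (hcoe i) continuous_const)

lemma continuous_norm1 [Fintype α] : Continuous (norm1 : (α → ℝ) → ℝ) :=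
  continuous_finsetSum _ fun i _ => (continuous_apply i).abs

lemma norm_le_norm1 [Fintype α] (x : α → ℝ) : ‖x‖ ≤ norm1 x :=
  (pi_norm_le_iff_of_nonneg (Finset.sum_nonneg fun _ _ => abs_nonneg _)).2 fun i =>
    (Real.norm_eq_abs _).trans_le (Finset.single_le_sum (fun j _ => abs_nonneg (x j))
      (Finset.mem_univ i))

lemma IsClosed.exists_isMinOn_norm1 [Fintype α] {S : Set (α → ℝ)} (hS : IsClosed S)
    (hne : S.Nonempty) : ∃ x ∈ S, IsMinOn norm1 S x := by
  obtain ⟨x₀, hx₀⟩ := hne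
  refine continuous_norm1.continuousOn.exists_isMinOn' hS hx₀ ?_
  have : Tendsto norm1 (cocompact (α → ℝ)) atTop :=
    tendsto_atTop_mono norm_le_norm1 tendsto_norm_cocompact_atTop
  exact (this.eventually_ge_atTop _).filter_mono inf_le_left

lemma exists_pos_mul_abs_le [Finite α] {g s : α → ℝ} (hs : ∀ i, g i ≠ 0 → 0 < s i) :
    ∃ ε > 0, ∀ i, g i ≠ 0 → ε * |g i| ≤ s i := by
  have hev : ∀ i, ∀ᶠ ε in 𝓝[>] (0 : ℝ), g i ≠ 0 → ε * |g i| ≤ s i := fun i => by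
    by_cases hi : g i = 0
    · exact .of_forall fun _ h => (h hi).elim
    · have : Tendsto (fun ε => ε * |g i|) (𝓝[>] 0) (𝓝 0) :=
        ((continuous_mul_const |g i|).tendsto' 0 0 (zero_mul _)).mono_left nhdsWithin_le_nhds
      exact (this.eventually_lt_const (hs i hi)).mono fun ε h _ => h.le
  obtain ⟨ε, h, hε⟩ := ((eventually_all.2 hev).and self_mem_nhdsWithin).exists
  exact ⟨ε, hε, h⟩

/-- Otherwise `x - ε • g` is a feasible point of smaller ℓ₁ norm. -/
theorem IsMinOn.exists_abs_le_zeroGap [Fintype α] {W : Submodule ℝ (α → ℝ)}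
    {l u : α → EReal} {x g : α → ℝ} (hxP : x ∈ feasibleSet W l u)
    (hmin : IsMinOn norm1 (feasibleSet W l u) x) (hg : g ∈ W) (hg0 : g ≠ 0)
    (hgx : SignConsistent g x) : ∃ j, g j ≠ 0 ∧ |x j| ≤ zeroGap (l j) (u j) := by
  by_contra! hslack
  obtain ⟨ε, hε, hεg⟩ := exists_pos_mul_abs_le (s := fun j => |x j| - zeroGap (l j) (u j))
    fun j hj => sub_pos.2 (hslack j hj)
  have hstep : ∀ j, ε * |g j| ≤ |x j| - zeroGap (l j) (u j) := fun j => by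
    by_cases hj : g j = 0
    · simpa [hj] using zeroGap_le_abs (hxP.2 j).1 (hxP.2 j).2
    · exact hεg j hj
  set y := x - ε • g
  have hyx : SignConsistent y x :=
    hgx.sub_smul_self hε.le fun j => (hstep j).trans (sub_le_self _ zeroGap_nonneg)
  have hxy : ∀ j, |x j| = |y j| + ε * |g j| := fun j => by
    simpa [y, abs_mul, abs_of_pos hε] using hyx.abs_add (hgx.smul hε.le) j
  have hyP : y ∈ feasibleSet W l u := by
    refine ⟨W.sub_mem hxP.1 (W.smul_mem ε hg), fun j => ?_⟩
    have hgj : 0 ≤ ε * |g j| := by positivity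
    refine (zeroGap_le_abs_iff (hxP.2 j).1 (hxP.2 j).2 (hyx.1 j) ?_).1 ?_
    · linarith [hxy j]
    · linarith [hxy j, hstep j]
  have hg1 : 0 < ∑ j, |g j| := by
    obtain ⟨j, hj⟩ := Function.ne_iff.1 hg0
    exact Finset.sum_pos' (fun _ _ => abs_nonneg _) ⟨j, Finset.mem_univ _, abs_pos.2 hj⟩
  have hlt : norm1 y < norm1 x := calc
    norm1 y < norm1 y + ε * ∑ j, |g j| := lt_add_of_pos_right _ (mul_pos hε hg1)
    _ = norm1 x := by simp only [norm1, hxy, Finset.sum_add_distrib, Finset.mul_sum]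
  exact (hmin hyP).not_gt hlt

theorem hoffman_proximity_general {n : ℕ} (W : Submodule ℝ (Fin n → ℝ))
    (l u : Fin n → EReal)
    (lp up : Fin n → ℝ)
    (hlp : ∀ i, lp i = (max (l i) 0).toReal)
    (hup : ∀ i, up i = (max (-(u i)) 0).toReal)
    (hP : ∃ x ∈ W, ∀ i, l i ≤ (x i : EReal) ∧ (x i : EReal) ≤ u i) :
    (∀ x ∈ W, (∀ i, l i ≤ (x i : EReal) ∧ (x i : EReal) ≤ u i) →
      norm1 (lp + up) ≤ ∑ i, if up i ≠ 0 ∨ lp i ≠ 0 then |x i| else 0) ∧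
    (∃ x ∈ W, (∀ i, l i ≤ (x i : EReal) ∧ (x i : EReal) ≤ u i) ∧
      normInf x ≤ kappa W * norm1 (lp + up)) := by
  have hgap : ∀ i, lp i + up i = zeroGap (l i) (u i) := fun i => by rw [hlp, hup, zeroGap]
  have hnorm1 : norm1 (lp + up) = ∑ i, zeroGap (l i) (u i) := by
    simp [norm1, hgap, abs_of_nonneg zeroGap_nonneg]
  refine ⟨fun x _ hx => hnorm1 ▸ Finset.sum_le_sum fun i _ => ?_, ?_⟩
  · split_ifs with h
    · exact zeroGap_le_abs (hx i).1 (hx i).2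
    · push Not at h
      rw [← hgap, h.1, h.2, add_zero]
  obtain ⟨x, hxP, hmin⟩ := (isClosed_feasibleSet W l u).exists_isMinOn_norm1 hP
  set T := Finset.univ.filter fun j => |x j| ≤ zeroGap (l j) (u j)
  have hT : ∑ j ∈ T, |x j| ≤ norm1 (lp + up) := by
    rw [hnorm1]
    exact (Finset.sum_le_sum fun j hj => (Finset.mem_filter.1 hj).2).trans
      (Finset.sum_le_sum_of_subset_of_nonneg (Finset.subset_univ T) fun _ _ _ => zeroGap_nonneg)
  refine ⟨x, hxP.1, hxP.2, Real.iSup_le (fun i => ?_)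
    (mul_nonneg (kappa_nonneg W) (hnorm1 ▸ Finset.sum_nonneg fun _ _ => zeroGap_nonneg))⟩
  refine (abs_le_kappa_mul_sum_of_meets_circuits T hxP.1 (fun g hg hg0 hgx _ => ?_) i).trans
    (mul_le_mul_of_nonneg_left hT (kappa_nonneg W))
  obtain ⟨j, hj, hjT⟩ := hmin.exists_abs_le_zeroGap hxP hg hg0 hgx
  exact ⟨j, Finset.mem_filter.2 ⟨Finset.mem_univ j, hjT⟩, hj⟩

/-- Hoffman Proximity Theorem. Lower bounds `ℓ ∈ (ℝ ∪ {−∞})^n` and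
upper bounds `u ∈ (ℝ ∪ {+∞})^n` are modelled as `EReal`-valued vectors avoiding `⊤`
resp. `⊥`; `lp = ℓ⁺` and `up = u⁻`. -/
theorem hoffman_proximity {n : ℕ} (W : Submodule ℝ (Fin n → ℝ))
    (l u : Fin n → EReal) (hl : ∀ i, l i ≠ ⊤) (hu : ∀ i, u i ≠ ⊥)
    (lp up : Fin n → ℝ)
    (hlp : ∀ i, lp i = (max (l i) 0).toReal)
    (hup : ∀ i, up i = (max (-(u i)) 0).toReal)
    (hP : ∃ x ∈ W, ∀ i, l i ≤ (x i : EReal) ∧ (x i : EReal) ≤ u i) :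
    (∀ x ∈ W, (∀ i, l i ≤ (x i : EReal) ∧ (x i : EReal) ≤ u i) →
      norm1 (lp + up) ≤ ∑ i, if up i ≠ 0 ∨ lp i ≠ 0 then |x i| else 0) ∧
    (∃ x ∈ W, (∀ i, l i ≤ (x i : EReal) ∧ (x i : EReal) ≤ u i) ∧
      normInf x ≤ kappa W * norm1 (lp + up)) :=
  hoffman_proximity_general W l u lp up hlp hup hP
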